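/- Let d = 2k+1 ≥ 5 be an odd integer. None of the triples ((0,0,0), (2,0,d), (1,0,k)), ((1,0,0), (2,k,1), (3,d,0)), ((1,0,0), (2,k+1,0), (3,d,0)) of elements of W_d admits a non-trivial suitable 3-binomial: for each such triple (a₁,a₂,a₃) there exist no b₁, b₂, b₃ ∈ W_d with b₁ + b₂ + b₃ = a₁ + a₂ + a₃ componentwise in ℤ³ and {b₁,b₂,b₃} ∩ {a₁,a₂,a₃} = ∅. -/

import Mathlib

/-- `W_d`: triples `(r,γ,δ)` encoding the degree-`d` monomials invariant under the
action of the diagonal matrix `M(1,e,e²,e³)`. -/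
def Wset (d : ℕ) : Set (ℤ × ℤ × ℤ) :=
  {x | 0 ≤ x.1 ∧ x.1 ≤ 3 ∧ 0 ≤ x.2.1 ∧ 0 ≤ x.2.2 ∧
    0 ≤ x.2.2 + 2 * x.2.1 + (1 - x.1) * (d : ℤ) ∧ 2 * x.2.2 + 3 * x.2.1 ≤ x.1 * (d : ℤ)}

/-- The triple `(a₁,a₂,a₃)` of elements of `W_d` admits a non-trivial suitable
3-binomial: there are `b₁,b₂,b₃ ∈ W_d` with `b₁+b₂+b₃ = a₁+a₂+a₃` and
`{b₁,b₂,b₃} ∩ {a₁,a₂,a₃} = ∅`. -/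
def AdmitsNT3 (d : ℕ) (a₁ a₂ a₃ : ℤ × ℤ × ℤ) : Prop :=
  ∃ b₁ b₂ b₃ : ℤ × ℤ × ℤ, b₁ ∈ Wset d ∧ b₂ ∈ Wset d ∧ b₃ ∈ Wset d ∧
    b₁ + b₂ + b₃ = a₁ + a₂ + a₃ ∧
    ({b₁, b₂, b₃} : Set (ℤ × ℤ × ℤ)) ∩ {a₁, a₂, a₃} = ∅

/-!
Each triple is excluded by locating the possible `b`'s inside a slice of `W_d` cut out by the
sum. For the first triple, `γ ≥ 0` on `W_d` and the `a`'s have `γ = 0`, so every `b` lies on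
the face `γ = 0`, which consists of `(0,0,0)`, the points `(1,0,δ)` with `δ ≤ k`, and `(2,0,d)`.
Avoiding the `a`'s forces `r = 1` for all three `b`'s, so their `δ`'s add up to at most
`3k < d + k`. For the other two triples the `b`'s have `δ ≤ 1`; in that slab the only point
with `r = 3` is `(3,d,0)`, so all three `b`'s have `r = 2` (the `r`'s add up to `6`), and then
`δ + 2γ ≥ d` together with avoiding `(2,k,1)`, resp. `(2,k+1,0)`, makes their `γ`'s too large.
-/

variable {d k : ℕ}

theorem AdmitsNT3.exists_mem_sdiff {a₁ a₂ a₃ : ℤ × ℤ × ℤ} (h : AdmitsNT3 d a₁ a₂ a₃) :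
    ∃ b₁ b₂ b₃, b₁ ∈ Wset d \ {a₁, a₂, a₃} ∧ b₂ ∈ Wset d \ {a₁, a₂, a₃} ∧
      b₃ ∈ Wset d \ {a₁, a₂, a₃} ∧ b₁ + b₂ + b₃ = a₁ + a₂ + a₃ := by
  obtain ⟨b₁, b₂, b₃, h₁, h₂, h₃, hsum, hdisj⟩ := h
  have hnot : ∀ b ∈ ({b₁, b₂, b₃} : Set (ℤ × ℤ × ℤ)), b ∉ ({a₁, a₂, a₃} : Set _) :=
    fun b hb ha => (Set.eq_empty_iff_forall_notMem.mp hdisj) b ⟨hb, ha⟩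
  exact ⟨b₁, b₂, b₃, ⟨h₁, hnot b₁ (by simp)⟩, ⟨h₂, hnot b₂ (by simp)⟩,
    ⟨h₃, hnot b₃ (by simp)⟩, hsum⟩

theorem Wset.snd_fst_nonneg {x : ℤ × ℤ × ℤ} (hx : x ∈ Wset d) : 0 ≤ x.2.1 := hx.2.2.1

theorem Wset.snd_snd_nonneg {x : ℤ × ℤ × ℤ} (hx : x ∈ Wset d) : 0 ≤ x.2.2 := hx.2.2.2.1

theorem not_admitsNT3_one_zero_k (hdk : d = 2 * k + 1) :
    ¬ AdmitsNT3 d ((0:ℤ),0,0) ((2:ℤ),0,(d:ℤ)) ((1:ℤ),0,(k:ℤ)) := by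
  intro h
  obtain ⟨b₁, b₂, b₃, h₁, h₂, h₃, hsum⟩ := h.exists_mem_sdiff
  simp only [Prod.ext_iff, Prod.fst_add, Prod.snd_add] at hsum
  have on_face : ∀ b ∈ Wset d \ {((0:ℤ),0,0), ((2:ℤ),0,(d:ℤ)), ((1:ℤ),0,(k:ℤ))},
      b.2.1 = 0 → b.1 = 1 ∧ b.2.2 ≤ k := by
    rintro ⟨r, γ, δ⟩ hb hγ
    simp only [Wset, Set.mem_sdiff, Set.mem_ofPred_eq, Set.mem_insert_iff,
      Set.mem_singleton_iff, Prod.ext_iff] at hb hγ ⊢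
    obtain ⟨⟨hr₀, hr₃, hW⟩, hne⟩ := hb
    interval_cases r <;> omega
  have := Wset.snd_fst_nonneg h₁.1
  have := Wset.snd_fst_nonneg h₂.1
  have := Wset.snd_fst_nonneg h₃.1
  have := on_face b₁ h₁ (by omega)
  have := on_face b₂ h₂ (by omega)
  have := on_face b₃ h₃ (by omega)
  omega

theorem not_admitsNT3_two_k_one (hdk : d = 2 * k + 1) :
    ¬ AdmitsNT3 d ((1:ℤ),0,0) ((2:ℤ),(k:ℤ),1) ((3:ℤ),(d:ℤ),0) := by
  intro h
  obtain ⟨b₁, b₂, b₃, h₁, h₂, h₃, hsum⟩ := h.exists_mem_sdiff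
  simp only [Prod.ext_iff, Prod.fst_add, Prod.snd_add] at hsum
  have in_slab : ∀ b ∈ Wset d \ {((1:ℤ),0,0), ((2:ℤ),(k:ℤ),1), ((3:ℤ),(d:ℤ),0)},
      b.2.2 ≤ 1 → b.1 ≤ 2 ∧ (b.1 = 2 → k + 1 ≤ b.2.1) := by
    rintro ⟨r, γ, δ⟩ hb hδ
    simp only [Wset, Set.mem_sdiff, Set.mem_ofPred_eq, Set.mem_insert_iff,
      Set.mem_singleton_iff, Prod.ext_iff] at hb hδ ⊢
    obtain ⟨⟨hr₀, hr₃, hW⟩, hne⟩ := hb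
    interval_cases r <;> omega
  have := Wset.snd_snd_nonneg h₁.1
  have := Wset.snd_snd_nonneg h₂.1
  have := Wset.snd_snd_nonneg h₃.1
  have := in_slab b₁ h₁ (by omega)
  have := in_slab b₂ h₂ (by omega)
  have := in_slab b₃ h₃ (by omega)
  omega

theorem not_admitsNT3_two_succ_k_zero (hdk : d = 2 * k + 1) :
    ¬ AdmitsNT3 d ((1:ℤ),0,0) ((2:ℤ),(k:ℤ)+1,0) ((3:ℤ),(d:ℤ),0) := by
  intro h
  obtain ⟨b₁, b₂, b₃, h₁, h₂, h₃, hsum⟩ := h.exists_mem_sdiff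
  simp only [Prod.ext_iff, Prod.fst_add, Prod.snd_add] at hsum
  have on_face : ∀ b ∈ Wset d \ {((1:ℤ),0,0), ((2:ℤ),(k:ℤ)+1,0), ((3:ℤ),(d:ℤ),0)},
      b.2.2 = 0 → b.1 ≤ 2 ∧ (b.1 = 2 → k + 2 ≤ b.2.1) := by
    rintro ⟨r, γ, δ⟩ hb hδ
    simp only [Wset, Set.mem_sdiff, Set.mem_ofPred_eq, Set.mem_insert_iff,
      Set.mem_singleton_iff, Prod.ext_iff] at hb hδ ⊢
    obtain ⟨⟨hr₀, hr₃, hW⟩, hne⟩ := hb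
    interval_cases r <;> omega
  have := Wset.snd_snd_nonneg h₁.1
  have := Wset.snd_snd_nonneg h₂.1
  have := Wset.snd_snd_nonneg h₃.1
  have := on_face b₁ h₁ (by omega)
  have := on_face b₂ h₂ (by omega)
  have := on_face b₃ h₃ (by omega)
  omega

theorem stmt18 (d k : ℕ) (hdk : d = 2 * k + 1) :
    ¬ AdmitsNT3 d ((0:ℤ),0,0) ((2:ℤ),0,(d:ℤ)) ((1:ℤ),0,(k:ℤ)) ∧
    ¬ AdmitsNT3 d ((1:ℤ),0,0) ((2:ℤ),(k:ℤ),1) ((3:ℤ),(d:ℤ),0) ∧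
    ¬ AdmitsNT3 d ((1:ℤ),0,0) ((2:ℤ),(k:ℤ)+1,0) ((3:ℤ),(d:ℤ),0) :=
  ⟨not_admitsNT3_one_zero_k hdk, not_admitsNT3_two_k_one hdk, not_admitsNT3_two_succ_k_zero hdk⟩
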